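/- For e ≥ 2, σ̂_1(S_e) ≡ 2^{2e-2} modulo 2^{2e-1}, where σ̂_1(S_e) = ∑_{j ∈ S_e} ∏_{i ∈ S_e, i ≠ j} i. -/

import Mathlib

/-!
Pair each odd `j < 2 ^ e` with `2 ^ e - j`: the products omitting `j` and omitting `2 ^ e - j`
add up to `2 ^ e * Q j`, where `Q j` omits both, so `σ̂₁(S_e) = 2 ^ e * ∑_{j < 2 ^ (e - 1)} Q j`.
Modulo `2 ^ (e - 1)` we have `2 ^ e - j ≡ -j`, hence `Q j ≡ -P / j ^ 2` with `P = ∏ S_e` odd.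
Inversion permutes the odd residues, so `∑ Q j ≡ -P ∑ j ^ 2`, and the closed form
`3 ∑_{j < 2M odd} j ^ 2 = 4 M ^ 3 - M` gives `∑ j ^ 2 ≡ 2 ^ (e - 2) (mod 2 ^ (e - 1))`;
finally `-P * 2 ^ (e - 2) ≡ 2 ^ (e - 2)` because `P` is odd.
-/

open Finset

/-- `S_e = oddsBelow (2 ^ e)`. -/
def oddsBelow (n : ℕ) : Finset ℕ := (range n).filter (fun j => Odd j)

lemma mem_oddsBelow {n j : ℕ} : j ∈ oddsBelow n ↔ j < n ∧ Odd j := by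
  simp [oddsBelow]

lemma oddsBelow_mono {m n : ℕ} (h : m ≤ n) : oddsBelow m ⊆ oddsBelow n :=
  filter_subset_filter _ (range_mono h)

lemma two_mul_sub_mem_oddsBelow {N j : ℕ} (hj : j ∈ oddsBelow N) :
    2 * N - j ∈ oddsBelow (2 * N) := by
  rw [mem_oddsBelow, Nat.odd_iff] at hj ⊢
  omega

lemma oddsBelow_two_mul_succ (M : ℕ) :
    oddsBelow (2 * (M + 1)) = insert (2 * M + 1) (oddsBelow (2 * M)) := by
  ext j
  simp only [mem_insert, mem_oddsBelow, Nat.odd_iff]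
  omega

lemma three_mul_sum_sq_oddsBelow_add (M : ℕ) :
    3 * ∑ j ∈ oddsBelow (2 * M), j ^ 2 + M = 4 * M ^ 3 := by
  induction M with
  | zero => rfl
  | succ M ih =>
    rw [oddsBelow_two_mul_succ, sum_insert (by simp [mem_oddsBelow])]
    linarith

lemma sum_sq_oddsBelow_two_pow_modEq (k : ℕ) :
    ∑ j ∈ oddsBelow (2 ^ (k + 1)), j ^ 2 ≡ 2 ^ k [MOD 2 ^ (k + 1)] := by
  have h := three_mul_sum_sq_oddsBelow_add (2 ^ k)
  rw [← pow_succ'] at h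
  refine Nat.ModEq.cancel_left_of_coprime (c := 3) (by norm_num)
    (Nat.ModEq.add_right_cancel' (2 ^ k) ?_)
  rw [h]
  calc 4 * (2 ^ k) ^ 3 = 2 ^ (k + 1) * 2 ^ (2 * k + 1) := by ring
    _ ≡ 2 ^ (k + 1) * 2 [MOD 2 ^ (k + 1)] := (Nat.modEq_zero_iff_dvd.2 (dvd_mul_right _ _)).trans
        (Nat.modEq_zero_iff_dvd.2 (dvd_mul_right _ _)).symm
    _ = 3 * 2 ^ k + 2 ^ k := by ring

lemma sum_coprime_eq_sum_units {M : Type*} [AddCommMonoid M] {n : ℕ} [NeZero n]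
    (g : ZMod n → M) :
    ∑ j ∈ (range n).filter (Nat.Coprime · n), g j = ∑ u : (ZMod n)ˣ, g u := by
  refine sum_bij' (fun j hj => ZMod.unitOfCoprime j (mem_filter.1 hj).2)
    (fun u _ => (u : ZMod n).val) (fun _ _ => mem_univ _) (fun u _ => ?_) (fun j hj => ?_)
    (fun u _ => ?_) (fun j hj => ?_)
  · exact mem_filter.2 ⟨mem_range.2 (ZMod.val_lt _), ZMod.val_coe_unit_coprime u⟩
  · simp [ZMod.val_cast_of_lt (mem_range.1 (mem_filter.1 hj).1)]
  · ext; simp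
  · simp

lemma oddsBelow_two_pow_succ (k : ℕ) :
    oddsBelow (2 ^ (k + 1)) = (range (2 ^ (k + 1))).filter (Nat.Coprime · (2 ^ (k + 1))) := by
  ext j
  simp [mem_oddsBelow, Nat.coprime_pow_right_iff, Nat.coprime_two_right]

lemma sum_inv_sq_oddsBelow_two_pow (k : ℕ) :
    ∑ j ∈ oddsBelow (2 ^ (k + 1)), ((j : ZMod (2 ^ (k + 1)))⁻¹) ^ 2
      = ∑ j ∈ oddsBelow (2 ^ (k + 1)), (j : ZMod (2 ^ (k + 1))) ^ 2 := by
  rw [oddsBelow_two_pow_succ, sum_coprime_eq_sum_units (fun x => x⁻¹ ^ 2),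
    sum_coprime_eq_sum_units (fun x => x ^ 2)]
  simp only [ZMod.inv_coe_unit]
  exact Fintype.sum_equiv (Equiv.inv _) _ _ fun _ => rfl

lemma prod_erase_add_prod_erase {ι R : Type*} [DecidableEq ι] [CommSemiring R]
    {s : Finset ι} {a b : ι} (ha : a ∈ s) (hb : b ∈ s) (hab : a ≠ b) (f : ι → R) :
    ∏ i ∈ s.erase a, f i + ∏ i ∈ s.erase b, f i
      = (f a + f b) * ∏ i ∈ (s.erase a).erase b, f i := by
  rw [← mul_prod_erase (s.erase a) f (mem_erase.2 ⟨hab.symm, hb⟩),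
    ← mul_prod_erase (s.erase b) f (mem_erase.2 ⟨hab, ha⟩), erase_right_comm]
  ring

lemma sum_oddsBelow_two_mul {M : Type*} [AddCommMonoid M] {N : ℕ} (hN : Even N)
    (g : ℕ → M) :
    ∑ j ∈ oddsBelow (2 * N), g j = ∑ j ∈ oddsBelow N, (g j + g (2 * N - j)) := by
  obtain ⟨c, rfl⟩ := hN
  have hsplit : oddsBelow (2 * (c + c))
      = oddsBelow (c + c) ∪ (oddsBelow (c + c)).image (2 * (c + c) - ·) := by
    ext j
    simp only [mem_union, mem_image, mem_oddsBelow, Nat.odd_iff]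
    constructor
    · intro h
      by_cases hj : j < c + c
      · exact Or.inl ⟨hj, h.2⟩
      · exact Or.inr ⟨2 * (c + c) - j, by omega, by omega⟩
    · rintro (h | ⟨i, hi, rfl⟩) <;> omega
  rw [sum_add_distrib, hsplit, sum_union, sum_image]
  · intro a ha b hb (hab : 2 * (c + c) - a = 2 * (c + c) - b)
    rw [mem_coe, mem_oddsBelow] at ha hb
    omega
  · simp only [disjoint_left, mem_image, mem_oddsBelow, Nat.odd_iff]
    rintro a ha ⟨i, hi, rfl⟩
    omega

lemma sum_prod_erase_oddsBelow_two_mul {N : ℕ} (hN : Even N) :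
    ∑ j ∈ oddsBelow (2 * N), ∏ i ∈ (oddsBelow (2 * N)).erase j, i
      = 2 * N * ∑ j ∈ oddsBelow N, ∏ i ∈ ((oddsBelow (2 * N)).erase j).erase (2 * N - j), i := by
  rw [sum_oddsBelow_two_mul hN, mul_sum]
  refine sum_congr rfl fun j hj => ?_
  have hjN := (mem_oddsBelow.1 hj).1
  rw [prod_erase_add_prod_erase (oddsBelow_mono (by omega) hj) (two_mul_sub_mem_oddsBelow hj)
    (by omega), Nat.add_sub_cancel' (by omega)]

lemma natCast_prod_erase_erase {n : ℕ} {s : Finset ℕ} {j j' : ℕ} (hj : j ∈ s) (hj' : j' ∈ s)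
    (hne : j ≠ j') (hneg : (j' : ZMod n) = -j) (hcop : j.Coprime n) :
    ((∏ i ∈ (s.erase j).erase j', i : ℕ) : ZMod n)
      = -(∏ i ∈ s, i : ℕ) * ((j : ZMod n)⁻¹) ^ 2 := by
  set Q := ∏ i ∈ (s.erase j).erase j', i
  have hprod : ∏ i ∈ s, i = j * (j' * Q) := by
    rw [mul_prod_erase _ (fun i => i) (mem_erase.2 ⟨hne.symm, hj'⟩),
      mul_prod_erase _ (fun i => i) hj]
  have hinv := ZMod.coe_mul_inv_eq_one j hcop
  rw [hprod, Nat.cast_mul, Nat.cast_mul, hneg]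
  linear_combination (-(Q : ZMod n) * (1 + (j : ZMod n) * (j : ZMod n)⁻¹)) * hinv

lemma odd_prod_oddsBelow (n : ℕ) : Odd (∏ i ∈ oddsBelow n, i) :=
  prod_induction _ Odd (fun _ _ => Odd.mul) odd_one fun _ hi => (mem_oddsBelow.1 hi).2

lemma neg_odd_mul_two_pow {k P : ℕ} (hP : Odd P) : -(P : ZMod (2 ^ (k + 1))) * 2 ^ k = 2 ^ k := by
  obtain ⟨c, rfl⟩ := hP
  have h : (2 : ZMod (2 ^ (k + 1))) ^ (k + 1) = 0 := by
    exact_mod_cast ZMod.natCast_self (2 ^ (k + 1))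
  push_cast
  linear_combination (-(c : ZMod (2 ^ (k + 1))) - 1) * h

lemma sum_prod_erase_erase_oddsBelow_modEq (k : ℕ) :
    ∑ j ∈ oddsBelow (2 ^ (k + 1)),
      ∏ i ∈ ((oddsBelow (2 * 2 ^ (k + 1))).erase j).erase (2 * 2 ^ (k + 1) - j), i
      ≡ 2 ^ k [MOD 2 ^ (k + 1)] := by
  set N := 2 ^ (k + 1)
  have hQ : ∀ j ∈ oddsBelow N, ((∏ i ∈ ((oddsBelow (2 * N)).erase j).erase (2 * N - j), i : ℕ)
      : ZMod N) = -(∏ i ∈ oddsBelow (2 * N), i : ℕ) * ((j : ZMod N)⁻¹) ^ 2 := by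
    intro j hj
    have hjN := (mem_oddsBelow.1 hj).1
    refine natCast_prod_erase_erase (oddsBelow_mono (by omega) hj)
      (two_mul_sub_mem_oddsBelow hj) (by omega) ?_ ?_
    · rw [Nat.cast_sub (by omega), Nat.cast_mul, ZMod.natCast_self, mul_zero, zero_sub]
    · exact Nat.Coprime.pow_right _ (Nat.coprime_two_right.2 (mem_oddsBelow.1 hj).2)
  have hsq : ∑ j ∈ oddsBelow N, (j : ZMod N) ^ 2 = 2 ^ k := by
    exact_mod_cast (ZMod.natCast_eq_natCast_iff _ _ _).2 (sum_sq_oddsBelow_two_pow_modEq k)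
  rw [← ZMod.natCast_eq_natCast_iff, Nat.cast_sum, sum_congr rfl hQ, ← mul_sum,
    sum_inv_sq_oddsBelow_two_pow, hsq, Nat.cast_pow, Nat.cast_ofNat]
  exact neg_odd_mul_two_pow (odd_prod_oddsBelow _)

theorem sigma_hat_one_mod (e : ℕ) (he : 2 ≤ e) :
    (∑ j ∈ (Finset.range (2 ^ e)).filter (fun j => Odd j),
      ∏ i ∈ ((Finset.range (2 ^ e)).filter (fun j => Odd j)).erase j, i)
      ≡ 2 ^ (2 * e - 2) [MOD 2 ^ (2 * e - 1)] := by
  obtain ⟨k, rfl⟩ : ∃ k, e = k + 2 := ⟨e - 2, by omega⟩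
  have hpow : 2 ^ (k + 2) = 2 * 2 ^ (k + 1) := by ring
  change ∑ j ∈ oddsBelow _, ∏ i ∈ (oddsBelow _).erase j, i ≡ _ [MOD _]
  rw [show 2 * (k + 2) - 2 = (k + 2) + k by omega,
    show 2 * (k + 2) - 1 = (k + 2) + (k + 1) by omega, pow_add 2 (k + 2) k,
    pow_add 2 (k + 2) (k + 1), hpow,
    sum_prod_erase_oddsBelow_two_mul (Nat.even_pow.2 ⟨even_two, by omega⟩)]
  exact (sum_prod_erase_erase_oddsBelow_modEq k).mul_left' _
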